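/- Let T be the 3×3 real matrix with rows (√2/2, √2/2, 0), (-√2/2, √2/2, 0), (0, 0, 1). If x : ZMod 8 → (Fin 3 → ℝ) satisfies the Eckart condition, then the map y defined by y i = T.mulVec (x (i+1)) also satisfies the Eckart condition. (This is the generator of the C₈-action by cyclic relabeling on standard realizations.) -/

import Mathlib

open Real Matrix

/-- The planar regular octagon reference configuration:
`xpln i = (cos ((2i-1)π/8), sin ((2i-1)π/8), 0)`, using the integer lift `i.val`;
this is well defined on `ZMod 8` since the expression is unchanged under `i ↦ i + 8`. -/
noncomputable def xpln (i : ZMod 8) : Fin 3 → ℝ :=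
  ![Real.cos ((2 * (i.val : ℝ) - 1) * π / 8), Real.sin ((2 * (i.val : ℝ) - 1) * π / 8), 0]

/-- The Eckart condition with respect to the reference octagon `xpln`. -/
def EckartCondition (x : ZMod 8 → Fin 3 → ℝ) : Prop :=
  (∑ i : ZMod 8, x i = 0) ∧ (∑ i : ZMod 8, (xpln i) ⨯₃ (x i) = 0)

/-- The rotation by `π/4` about the `z`-axis. -/
noncomputable def T : Matrix (Fin 3) (Fin 3) ℝ :=
  !![Real.sqrt 2 / 2,  Real.sqrt 2 / 2, 0;
     -Real.sqrt 2 / 2, Real.sqrt 2 / 2, 0;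
     0, 0, 1]

/-!
`T` is the rotation by `-π/4` about the `z`-axis. It moves each vertex of the reference octagon
to its predecessor, `T (xpln j) = xpln (j - 1)`, and, being a rotation, it commutes with the
cross product. Hence after reindexing `i ↦ i - 1` both Eckart sums of the shifted configuration
are `T` applied to the Eckart sums of `x`, which vanish.
-/

noncomputable def rotZ (θ : ℝ) : Matrix (Fin 3) (Fin 3) ℝ :=
  !![cos θ, -sin θ, 0;
     sin θ, cos θ, 0;
     0, 0, 1]

lemma T_eq_rotZ : T = rotZ (-(π / 4)) := by
  ext i j
  fin_cases i <;> fin_cases j <;> simp [T, rotZ, neg_div]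

lemma rotZ_mulVec_cross_mulVec (θ : ℝ) (u v : Fin 3 → ℝ) :
    (rotZ θ *ᵥ u) ⨯₃ (rotZ θ *ᵥ v) = rotZ θ *ᵥ (u ⨯₃ v) := by
  ext k
  fin_cases k <;> simp [rotZ, cross_apply, mulVec, dotProduct, Fin.sum_univ_three]
  · ring
  · ring
  · linear_combination (u 0 * v 1 - u 1 * v 0) * sin_sq_add_cos_sq θ

lemma rotZ_mulVec_cos_sin (θ φ : ℝ) :
    rotZ θ *ᵥ ![cos φ, sin φ, 0] = ![cos (θ + φ), sin (θ + φ), 0] := by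
  ext k
  fin_cases k <;> simp [rotZ, mulVec, dotProduct, Fin.sum_univ_three, cos_add, sin_add]
  ring

lemma xpln_intCast (n : ℤ) :
    xpln n = ![cos ((2 * n - 1) * π / 8), sin ((2 * n - 1) * π / 8), 0] := by
  have hval : (((n : ZMod 8).val : ℤ) : ℝ) = n - ((n / 8 : ℤ) : ℝ) * 8 := by
    rw [ZMod.val_intCast, Int.emod_def]; push_cast; ring
  have hangle : (2 * ((n : ZMod 8).val : ℝ) - 1) * π / 8
      = (2 * n - 1) * π / 8 - ((n / 8 : ℤ) : ℝ) * (2 * π) := by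
    rw [← Int.cast_natCast, hval]; ring
  simp only [xpln, hangle, cos_sub_int_mul_two_pi, sin_sub_int_mul_two_pi]

lemma T_mulVec_xpln (j : ZMod 8) : T *ᵥ xpln j = xpln (j - 1) := by
  obtain ⟨n, rfl⟩ := ZMod.intCast_surjective j
  have hangle : -(π / 4) + (2 * n - 1) * π / 8 = (2 * ((n - 1 : ℤ) : ℝ) - 1) * π / 8 := by
    push_cast; ring
  rw [← Int.cast_one, ← Int.cast_sub, xpln_intCast, xpln_intCast, T_eq_rotZ,
    rotZ_mulVec_cos_sin, hangle]

theorem eckartCondition_of_cyclic_shift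
    (x : ZMod 8 → Fin 3 → ℝ) (hx : EckartCondition x) :
    EckartCondition (fun i => T.mulVec (x (i + 1))) := by
  obtain ⟨h_sum, h_cross⟩ := hx
  have shift (f : ZMod 8 → Fin 3 → ℝ) : ∑ i, f (i + 1) = ∑ i, f i :=
    Fintype.sum_equiv (Equiv.addRight 1) _ _ fun _ => rfl
  constructor
  · rw [← mulVec_sum, shift x, h_sum, mulVec_zero]
  · calc ∑ i, xpln i ⨯₃ (T *ᵥ x (i + 1))
        = ∑ i, (T *ᵥ xpln (i + 1)) ⨯₃ (T *ᵥ x (i + 1)) := by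
          simp only [T_mulVec_xpln, add_sub_cancel_right]
      _ = ∑ i, T *ᵥ (xpln (i + 1) ⨯₃ x (i + 1)) := by
          simp only [T_eq_rotZ, rotZ_mulVec_cross_mulVec]
      _ = T *ᵥ ∑ i, xpln i ⨯₃ x i := by rw [← mulVec_sum, shift fun i => xpln i ⨯₃ x i]
      _ = 0 := by rw [h_cross, mulVec_zero]
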